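/- Let T be a self-adjoint operator on H and z a complex number with Im z > 0. Then the resolvent satisfies (zI − T)^{−1} = −i ∫_0^∞ e^{izt} e^{−itT} dt, the integral converging as a Bochner integral when applied to any vector x ∈ H. -/

import Mathlib

open MeasureTheory Complex Filter Topology

/-- The integral of a complex-valued function against a signed measure. -/
noncomputable def sInt (s : MeasureTheory.SignedMeasure ℝ) (f : ℝ → ℂ) : ℂ :=
  (∫ x, f x ∂s.toJordanDecomposition.posPart) - ∫ x, f x ∂s.toJordanDecomposition.negPart

/-- The integral of a complex-valued function against a complex (Stieltjes) measure. -/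
noncomputable def cInt (ν : MeasureTheory.ComplexMeasure ℝ) (f : ℝ → ℂ) : ℂ :=
  sInt (MeasureTheory.ComplexMeasure.re ν) f + Complex.I * sInt (MeasureTheory.ComplexMeasure.im ν) f

namespace Stmt6Aux

/-- bounded measurable function -/
def Bdd (f : ℝ → ℂ) : Prop := Measurable f ∧ ∃ C, ∀ x, ‖f x‖ ≤ C

lemma Bdd.nonneg_bound {f : ℝ → ℂ} {C : ℝ} (hC : ∀ x, ‖f x‖ ≤ C) : 0 ≤ C :=
  le_trans (norm_nonneg (f 0)) (hC 0)

lemma Bdd.integrable {μ : Measure ℝ} [IsFiniteMeasure μ] {f : ℝ → ℂ} (hf : Bdd f) :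
    Integrable f μ := by
  obtain ⟨C, hC⟩ := hf.2
  exact (integrable_const C).mono' hf.1.aestronglyMeasurable (Filter.Eventually.of_forall hC)

lemma Bdd.add {f g : ℝ → ℂ} (hf : Bdd f) (hg : Bdd g) : Bdd (f + g) := by
  obtain ⟨C, hC⟩ := hf.2; obtain ⟨D, hD⟩ := hg.2
  exact ⟨hf.1.add hg.1, C + D, fun x => (norm_add_le _ _).trans (add_le_add (hC x) (hD x))⟩

lemma Bdd.mul {f g : ℝ → ℂ} (hf : Bdd f) (hg : Bdd g) : Bdd (fun x => f x * g x) := by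
  obtain ⟨C, hC⟩ := hf.2; obtain ⟨D, hD⟩ := hg.2
  refine ⟨hf.1.mul hg.1, C * D, fun x => ?_⟩
  rw [norm_mul]
  exact mul_le_mul (hC x) (hD x) (norm_nonneg _) (Bdd.nonneg_bound hC)

lemma Bdd.indicator {f : ℝ → ℂ} (hf : Bdd f) {A : Set ℝ} (hA : MeasurableSet A) :
    Bdd (A.indicator f) := by
  obtain ⟨C, hC⟩ := hf.2
  refine ⟨hf.1.indicator hA, C, fun x => ?_⟩
  by_cases hx : x ∈ A
  · simpa [Set.indicator_of_mem hx] using hC x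
  · simpa [Set.indicator_of_notMem hx] using Bdd.nonneg_bound hC

lemma Bdd.simpleFunc (f : SimpleFunc ℝ ℂ) : Bdd f := by
  obtain ⟨C, hC⟩ := f.exists_forall_norm_le
  exact ⟨f.measurable, C, hC⟩

lemma sInt_add (s : SignedMeasure ℝ) {f g : ℝ → ℂ} (hf : Bdd f) (hg : Bdd g) :
    sInt s (f + g) = sInt s f + sInt s g := by
  unfold sInt
  simp only [Pi.add_apply]
  rw [integral_add hf.integrable hg.integrable, integral_add hf.integrable hg.integrable]
  ring

lemma sInt_smul (s : SignedMeasure ℝ) (c : ℂ) (f : ℝ → ℂ) :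
    sInt s (fun x => c * f x) = c * sInt s f := by
  unfold sInt
  rw [integral_const_mul, integral_const_mul]
  ring

lemma jordan_apply (s : SignedMeasure ℝ) {A : Set ℝ} (hA : MeasurableSet A) :
    s A = (s.toJordanDecomposition.posPart A).toReal
        - (s.toJordanDecomposition.negPart A).toReal := by
  conv_lhs => rw [← s.toSignedMeasure_toJordanDecomposition]
  rw [JordanDecomposition.toSignedMeasure, VectorMeasure.sub_apply,
    Measure.toSignedMeasure_apply_measurable hA, Measure.toSignedMeasure_apply_measurable hA]
  rfl

lemma sInt_indicator (s : SignedMeasure ℝ) {A : Set ℝ} (hA : MeasurableSet A) (c : ℂ) :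
    sInt s (A.indicator fun _ => c) = (s A : ℝ) • c := by
  unfold sInt
  rw [integral_indicator_const c hA, integral_indicator_const c hA, jordan_apply s hA,
    sub_smul]
  rfl

lemma sInt_neg (s : SignedMeasure ℝ) (f : ℝ → ℂ) : sInt (-s) f = - sInt s f := by
  unfold sInt
  rw [s.toJordanDecomposition_neg, JordanDecomposition.neg_posPart,
    JordanDecomposition.neg_negPart]
  ring

lemma sInt_tendsto (s : SignedMeasure ℝ) {F : ℕ → ℝ → ℂ} {f : ℝ → ℂ} {C : ℝ}
    (hm : ∀ n, Measurable (F n)) (hb : ∀ n x, ‖F n x‖ ≤ C)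
    (hlim : ∀ x, Tendsto (fun n => F n x) atTop (𝓝 (f x))) :
    Tendsto (fun n => sInt s (F n)) atTop (𝓝 (sInt s f)) := by
  unfold sInt
  refine Tendsto.sub ?_ ?_ <;>
    exact tendsto_integral_of_dominated_convergence (fun _ => C)
      (fun n => (hm n).aestronglyMeasurable) (integrable_const C)
      (fun n => Filter.Eventually.of_forall (hb n)) (Filter.Eventually.of_forall hlim)

lemma cInt_add (ν : ComplexMeasure ℝ) {f g : ℝ → ℂ} (hf : Bdd f) (hg : Bdd g) :
    cInt ν (f + g) = cInt ν f + cInt ν g := by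
  unfold cInt
  rw [sInt_add _ hf hg, sInt_add _ hf hg]
  ring

lemma cInt_smul (ν : ComplexMeasure ℝ) (c : ℂ) (f : ℝ → ℂ) :
    cInt ν (fun x => c * f x) = c * cInt ν f := by
  unfold cInt
  rw [sInt_smul, sInt_smul]
  ring

lemma cInt_indicator (ν : ComplexMeasure ℝ) {A : Set ℝ} (hA : MeasurableSet A) (c : ℂ) :
    cInt ν (A.indicator fun _ => c) = ν A * c := by
  unfold cInt
  rw [sInt_indicator _ hA, sInt_indicator _ hA]
  have h1 : (ComplexMeasure.re ν) A = (ν A).re := rfl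
  have h2 : (ComplexMeasure.im ν) A = (ν A).im := rfl
  rw [h1, h2, Complex.real_smul, Complex.real_smul]
  conv_rhs => rw [← Complex.re_add_im (ν A)]
  ring

lemma cInt_tendsto (ν : ComplexMeasure ℝ) {F : ℕ → ℝ → ℂ} {f : ℝ → ℂ} {C : ℝ}
    (hm : ∀ n, Measurable (F n)) (hb : ∀ n x, ‖F n x‖ ≤ C)
    (hlim : ∀ x, Tendsto (fun n => F n x) atTop (𝓝 (f x))) :
    Tendsto (fun n => cInt ν (F n)) atTop (𝓝 (cInt ν f)) := by
  unfold cInt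
  exact (sInt_tendsto _ hm hb hlim).add ((sInt_tendsto _ hm hb hlim).const_mul _)

lemma cInt_conj (κ lam : ComplexMeasure ℝ) (h : ∀ D, MeasurableSet D → κ D = (starRingEnd ℂ) (lam D))
    (f : ℝ → ℂ) : cInt κ (fun x => (starRingEnd ℂ) (f x)) = (starRingEnd ℂ) (cInt lam f) := by
  have hre : ComplexMeasure.re κ = ComplexMeasure.re lam := by
    ext D hD
    show Complex.reLm (κ D) = Complex.reLm (lam D)
    simp [ComplexMeasure.re_apply, h D hD]
  have him : ComplexMeasure.im κ = -ComplexMeasure.im lam := by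
    ext D hD
    show Complex.imLm (κ D) = -(Complex.imLm (lam D))
    simp [ComplexMeasure.im_apply, h D hD]
  have hconj : ∀ s : SignedMeasure ℝ, sInt s (fun x => (starRingEnd ℂ) (f x))
      = (starRingEnd ℂ) (sInt s f) := by
    intro s
    unfold sInt
    rw [integral_conj, integral_conj, map_sub]
  unfold cInt
  rw [hre, him, sInt_neg, hconj, hconj, map_add, map_mul, Complex.conj_I]
  ring

lemma cInt_key (κ lam : ComplexMeasure ℝ) {g : ℝ → ℂ} (hg : Bdd g)
    (h : ∀ D : Set ℝ, MeasurableSet D → κ D = cInt lam (D.indicator g)) :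
    ∀ f : ℝ → ℂ, Bdd f → cInt κ f = cInt lam (fun x => f x * g x) := by
  have hsimple : ∀ f : SimpleFunc ℝ ℂ, cInt κ f = cInt lam (fun x => f x * g x) := by
    intro f
    refine SimpleFunc.induction ?_ ?_ f
    · intro c A hA
      simp only [SimpleFunc.coe_piecewise, SimpleFunc.coe_const, SimpleFunc.coe_zero,
        Set.piecewise_eq_indicator]
      have h1 : ∀ x, (A.indicator (fun _ => c) x) * g x = c * (A.indicator g x) := by
        intro x; by_cases hx : x ∈ A <;> simp [hx]
      calc cInt κ (A.indicator fun _ => c) = κ A * c := cInt_indicator κ hA c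
        _ = cInt lam (A.indicator g) * c := by rw [h A hA]
        _ = cInt lam (fun x => c * (A.indicator g x)) := by rw [cInt_smul]; ring
        _ = cInt lam (fun x => (A.indicator (fun _ => c) x) * g x) := by
            congr 1; funext x; rw [h1]
    · intro f1 f2 _ hf1 hf2
      simp only [SimpleFunc.coe_add]
      have e1 : cInt κ (⇑f1 + ⇑f2) = cInt κ f1 + cInt κ f2 :=
        cInt_add κ (Bdd.simpleFunc f1) (Bdd.simpleFunc f2)
      have e2 : cInt lam (fun x => (⇑f1 + ⇑f2) x * g x)
          = cInt lam (fun x => f1 x * g x) + cInt lam (fun x => f2 x * g x) := by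
        rw [← cInt_add lam ((Bdd.simpleFunc f1).mul hg) ((Bdd.simpleFunc f2).mul hg)]
        congr 1; funext x; simp [add_mul]
      rw [e1, e2, hf1, hf2]
  intro f hf
  obtain ⟨C, hC⟩ := hf.2
  have hC0 : 0 ≤ C := Bdd.nonneg_bound hC
  have hsm : StronglyMeasurable f := hf.1.stronglyMeasurable
  set F := hsm.approxBounded C with hF
  have htend : ∀ x, Tendsto (fun n => F n x) atTop (𝓝 (f x)) :=
    fun x => StronglyMeasurable.tendsto_approxBounded_of_norm_le hsm (hC x)
  have h1 : Tendsto (fun n => cInt κ (F n)) atTop (𝓝 (cInt κ f)) :=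
    cInt_tendsto κ (fun n => (F n).measurable)
      (fun n x => hsm.norm_approxBounded_le hC0 n x) htend
  have h2 : Tendsto (fun n => cInt lam (fun x => F n x * g x)) atTop
      (𝓝 (cInt lam (fun x => f x * g x))) := by
    obtain ⟨D, hD⟩ := hg.2
    refine cInt_tendsto lam (C := C * D) (fun n => (F n).measurable.mul hg.1)
      (fun n x => ?_) (fun x => (htend x).mul_const (g x))
    rw [norm_mul]
    exact mul_le_mul (hsm.norm_approxBounded_le hC0 n x) (hD x) (norm_nonneg _) hC0
  exact tendsto_nhds_unique (h1.congr fun n => hsimple (F n)) h2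
lemma cexp_re_eq (c : ℂ) (t : ℝ) : (c * (t:ℂ)).re = c.re * t := by
  simp [Complex.mul_re]

lemma integrableOn_cexp {c : ℂ} (hc : c.re < 0) (a : ℝ) :
    IntegrableOn (fun t : ℝ => Complex.exp (c * t)) (Set.Ioi a) := by
  have h : IntegrableOn (fun t : ℝ => Real.exp (-(-c.re) * t)) (Set.Ioi a) :=
    exp_neg_integrableOn_Ioi a (by linarith)
  refine Integrable.mono' h
    ((Complex.continuous_exp.comp (continuous_const.mul Complex.continuous_ofReal)).aestronglyMeasurable)
    (Filter.Eventually.of_forall fun t => ?_)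
  rw [Complex.norm_exp, cexp_re_eq, neg_neg]

lemma integral_cexp_Ioi {c : ℂ} (hc : c.re < 0) :
    ∫ t in Set.Ioi (0:ℝ), Complex.exp (c * t) = -c⁻¹ := by
  have hc0 : c ≠ 0 := by intro h; rw [h] at hc; simp at hc
  have hderiv : ∀ t ∈ Set.Ioi (0:ℝ), HasDerivAt (fun t : ℝ => c⁻¹ * Complex.exp (c * t))
      (Complex.exp (c * t)) t := by
    intro t _
    have h1 : HasDerivAt (fun w : ℂ => c⁻¹ * Complex.exp (c * w))
        (c⁻¹ * (Complex.exp (c * (t:ℂ)) * (c * 1))) (t:ℂ) :=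
      (((hasDerivAt_id ((t:ℝ):ℂ)).const_mul c).cexp).const_mul c⁻¹
    have h2 := h1.comp_ofReal
    convert h2 using 1
    field_simp
  have htend : Tendsto (fun t : ℝ => c⁻¹ * Complex.exp (c * t)) atTop (𝓝 0) := by
    rw [tendsto_zero_iff_norm_tendsto_zero]
    have heq : ∀ t : ℝ, ‖c⁻¹ * Complex.exp (c * t)‖ = ‖c⁻¹‖ * Real.exp (-((-c.re) * t)) := by
      intro t
      rw [norm_mul, Complex.norm_exp, cexp_re_eq]
      ring_nf
    simp only [heq]
    have h2 : Tendsto (fun t : ℝ => (-c.re) * t) atTop atTop :=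
      Tendsto.const_mul_atTop (by linarith) tendsto_id
    have h3 := Real.tendsto_exp_neg_atTop_nhds_zero.comp h2
    have h4 := h3.const_mul ‖c⁻¹‖
    simpa [Function.comp] using h4
  have hcont : ContinuousWithinAt (fun t : ℝ => c⁻¹ * Complex.exp (c * t)) (Set.Ici 0) 0 :=
    (continuous_const.mul (Complex.continuous_exp.comp
      (continuous_const.mul Complex.continuous_ofReal))).continuousWithinAt
  have := MeasureTheory.integral_Ioi_of_hasDerivAt_of_tendsto hcont hderiv
    (integrableOn_cexp hc 0) htend
  rw [this]
  simp
end Stmt6Aux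

/-- A spectral (projection-valued) measure on `ℝ` acting on a complex Hilbert space `H`,
encoded together with the family of complex Stieltjes measures `ν y x (A) = ⟨y, E(A) x⟩`
(inner product antilinear in the first variable). -/
structure SpectralLike (H : Type) [NormedAddCommGroup H] [InnerProductSpace ℂ H]
    [CompleteSpace H] : Type where
  E : Set ℝ → H →L[ℂ] H
  ν : H → H → MeasureTheory.ComplexMeasure ℝ
  hν : ∀ (y x : H) (A : Set ℝ), MeasurableSet A → ν y x A = (inner ℂ y (E A x) : ℂ)
  hsa : ∀ A, IsSelfAdjoint (E A)
  hmul : ∀ A B, E (A ∩ B) = E A ∘L E B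
  huniv : E Set.univ = 1

/-- `A = f(T)` where the self-adjoint operator `T` has spectral measure `P`:
the defining weak-integral property of the Borel functional calculus. -/
def IsCalc {H : Type} [NormedAddCommGroup H] [InnerProductSpace ℂ H] [CompleteSpace H]
    (P : SpectralLike H) (f : ℝ → ℂ) (A : H →L[ℂ] H) : Prop :=
  ∀ x y : H, (inner ℂ y (A x) : ℂ) = cInt (P.ν y x) f

namespace Stmt6Aux

variable {H : Type} [NormedAddCommGroup H] [InnerProductSpace ℂ H] [CompleteSpace H]

lemma inner_E (P : SpectralLike H) (D : Set ℝ) (x y : H) :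
    (inner ℂ x (P.E D y) : ℂ) = inner ℂ (P.E D x) y := by
  rw [← ContinuousLinearMap.adjoint_inner_left (P.E D) y x,
      ← ContinuousLinearMap.star_eq_adjoint, P.hsa D]

lemma nu_conj (P : SpectralLike H) (x y : H) {D : Set ℝ} (hD : MeasurableSet D) :
    P.ν x y D = (starRingEnd ℂ) (P.ν y x D) := by
  rw [P.hν x y D hD, P.hν y x D hD, inner_E, ← inner_conj_symm]

lemma nu_restrict (P : SpectralLike H) (x y : H) {D : Set ℝ} (hD : MeasurableSet D) :
    P.ν (P.E D y) x = (P.ν y x).restrict D := by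
  refine MeasureTheory.VectorMeasure.ext fun D' hD' => ?_
  rw [P.hν _ _ D' hD', MeasureTheory.VectorMeasure.restrict_apply _ hD hD']
  rw [← inner_E P D y (P.E D' x)]
  have h1 : P.E D (P.E D' x) = P.E (D ∩ D') x := by rw [P.hmul]; rfl
  rw [h1, ← P.hν y x _ (hD.inter hD'), Set.inter_comm]

lemma calc_one (P : SpectralLike H) : IsCalc P (fun _ => (1:ℂ)) 1 := by
  intro x y
  have h1 : (fun _ : ℝ => (1:ℂ)) = Set.indicator Set.univ (fun _ => (1:ℂ)) := by
    simp
  rw [h1, cInt_indicator _ MeasurableSet.univ, mul_one, P.hν y x _ MeasurableSet.univ, P.huniv]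

lemma calc_unique (P : SpectralLike H) {f : ℝ → ℂ} {A B : H →L[ℂ] H}
    (hA : IsCalc P f A) (hB : IsCalc P f B) : A = B := by
  ext x
  refine ext_inner_left ℂ fun y => ?_
  rw [hA x y, hB x y]

lemma calc_adjoint (P : SpectralLike H) {f : ℝ → ℂ} {A : H →L[ℂ] H} (hA : IsCalc P f A) :
    IsCalc P (fun l => (starRingEnd ℂ) (f l)) (ContinuousLinearMap.adjoint A) := by
  intro x y
  rw [ContinuousLinearMap.adjoint_inner_right, ← inner_conj_symm, hA y x]
  exact (cInt_conj (P.ν y x) (P.ν x y) (fun D hD => nu_conj P y x hD) f).symm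

lemma calc_comp (P : SpectralLike H) {f g : ℝ → ℂ} {A B : H →L[ℂ] H}
    (hf : Bdd f) (hg : Bdd g) (hA : IsCalc P f A) (hB : IsCalc P g B) :
    IsCalc P (fun l => f l * g l) (A ∘L B) := by
  intro x y
  have hkey : ∀ D : Set ℝ, MeasurableSet D →
      P.ν y (B x) D = cInt (P.ν y x) (D.indicator g) := by
    intro D hD
    have hone : Bdd (D.indicator fun _ : ℝ => (1:ℂ)) :=
      Bdd.indicator ⟨measurable_const, 1, fun _ => by simp⟩ hD
    have h2 : cInt ((P.ν y x).restrict D) g = cInt (P.ν y x) (D.indicator g) := by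
      have h3 := cInt_key ((P.ν y x).restrict D) (P.ν y x) hone
        (fun D' hD' => by
          rw [MeasureTheory.VectorMeasure.restrict_apply _ hD hD',
            Set.indicator_indicator, cInt_indicator _ (hD'.inter hD), mul_one]) g hg
      rw [h3]
      congr 1
      funext l
      by_cases hl : l ∈ D <;> simp [hl]
    rw [P.hν y (B x) D hD, inner_E P D y (B x), hB x (P.E D y), nu_restrict P x y hD, h2]
  have h4 : (inner ℂ y ((A ∘L B) x) : ℂ) = cInt (P.ν y (B x)) f := hA (B x) y
  rw [h4, cInt_key (P.ν y (B x)) (P.ν y x) hg hkey f hf]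

end Stmt6Aux
namespace Stmt6Aux

variable {H : Type} [NormedAddCommGroup H] [InnerProductSpace ℂ H] [CompleteSpace H]

lemma expf_bound (t : ℝ) (l : ℝ) : ‖Complex.exp (-Complex.I * t * l)‖ ≤ 1 := by
  rw [Complex.norm_exp]
  have h : (-Complex.I * t * l).re = 0 := by simp
  rw [h, Real.exp_zero]

lemma expf_meas (t : ℝ) : Measurable fun l : ℝ => Complex.exp (-Complex.I * t * l) :=
  (Complex.continuous_exp.comp (continuous_const.mul Complex.continuous_ofReal)).measurable

lemma Bdd.expf (t : ℝ) : Bdd (fun l : ℝ => Complex.exp (-Complex.I * t * l)) :=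
  ⟨expf_meas t, 1, expf_bound t⟩

section Ugroup

variable (P : SpectralLike H) (U : ℝ → H →L[ℂ] H)
  (hU : ∀ t : ℝ, IsCalc P (fun l => Complex.exp (-Complex.I * t * l)) (U t))

include hU

lemma hU_zero : U 0 = 1 := by
  have h1 := hU 0
  have h2 : (fun l : ℝ => Complex.exp (-Complex.I * (0:ℝ) * l)) = fun _ : ℝ => (1:ℂ) := by
    funext l; push_cast; simp
  rw [h2] at h1
  exact calc_unique P h1 (calc_one P)

lemma hU_group (s t : ℝ) : (U s) ∘L (U t) = U (s + t) := by
  have h1 : IsCalc P (fun l : ℝ => Complex.exp (-Complex.I * s * l) *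
      Complex.exp (-Complex.I * t * l)) ((U s) ∘L (U t)) :=
    calc_comp P (Bdd.expf s) (Bdd.expf t) (hU s) (hU t)
  have h2 : (fun l : ℝ => Complex.exp (-Complex.I * s * l) * Complex.exp (-Complex.I * t * l))
      = fun l : ℝ => Complex.exp (-Complex.I * (s + t : ℝ) * l) := by
    funext l; rw [← Complex.exp_add]; congr 1; push_cast; ring
  rw [h2] at h1
  exact calc_unique P h1 (hU (s + t))

lemma hU_adj (t : ℝ) : ContinuousLinearMap.adjoint (U t) = U (-t) := by
  have h1 := calc_adjoint P (hU t)
  have h2 : (fun l : ℝ => (starRingEnd ℂ) (Complex.exp (-Complex.I * t * l)))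
      = fun l : ℝ => Complex.exp (-Complex.I * (-t : ℝ) * l) := by
    funext l
    rw [← Complex.exp_conj]
    congr 1
    push_cast
    simp [map_mul, Complex.conj_I, Complex.conj_ofReal]
  rw [h2] at h1
  exact calc_unique P h1 (hU (-t))

lemma hU_inner (s t : ℝ) (w v : H) :
    (inner ℂ (U s w) (U t v) : ℂ)
      = cInt (P.ν w v) (fun l => Complex.exp (-Complex.I * ((t - s : ℝ) : ℂ) * l)) := by
  have e1 : (inner ℂ (U s w) (U t v) : ℂ) = inner ℂ w ((U (-s) ∘L U t) v) := by
    rw [← ContinuousLinearMap.adjoint_inner_right (U s) w (U t v), hU_adj P U hU]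
    rfl
  rw [e1, hU_group P U hU]
  have h : -s + t = t - s := by ring
  rw [h]
  exact hU (t - s) v w

lemma hU_norm (t : ℝ) (w : H) : ‖U t w‖ = ‖w‖ := by
  have h2 : (U (-t)) ((U t) w) = w := by
    have h3 : (U (-t)) ((U t) w) = ((U (-t)) ∘L (U t)) w := rfl
    rw [h3, hU_group P U hU, neg_add_cancel, hU_zero P U hU, ContinuousLinearMap.one_apply]
  have h1 : (inner ℂ (U t w) (U t w) : ℂ) = inner ℂ w w := by
    rw [← ContinuousLinearMap.adjoint_inner_right (U t) w (U t w), hU_adj P U hU, h2]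
  have h5 : ‖U t w‖ ^ 2 = ‖w‖ ^ 2 := by
    rw [← inner_self_eq_norm_sq (𝕜 := ℂ), ← inner_self_eq_norm_sq (𝕜 := ℂ), h1]
  have h6 := congrArg Real.sqrt h5
  rwa [Real.sqrt_sq (norm_nonneg _), Real.sqrt_sq (norm_nonneg _)] at h6

lemma hU_cont (x : H) : Continuous fun t : ℝ => U t x := by
  refine continuous_iff_seqContinuous.mpr fun u t hu => ?_
  rw [tendsto_iff_dist_tendsto_zero]
  have hipnorm : ∀ x' : H, (inner ℂ x' x' : ℂ).re = ‖x'‖ ^ 2 := by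
    intro x'
    simpa [RCLike.re_to_complex] using inner_self_eq_norm_sq (𝕜 := ℂ) x'
  have hsq : ∀ n, dist (U (u n) x) (U t x) ^ 2
      = 2 * ‖x‖ ^ 2 - 2 * (cInt (P.ν x x)
          (fun l => Complex.exp (-Complex.I * ((t - u n : ℝ) : ℂ) * l))).re := by
    intro n
    rw [dist_eq_norm]
    have hns := @norm_sub_sq ℂ _ _ _ _ (U (u n) x) (U t x)
    rw [hns, hU_inner P U hU (u n) t x x, hU_norm P U hU, hU_norm P U hU]
    simp only [RCLike.re_to_complex]
    ring
  have h0 : Tendsto (fun n => t - u n) atTop (𝓝 0) := by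
    have := (tendsto_const_nhds (x := t) (f := atTop)).sub hu
    simpa using this
  have hlim : Tendsto (fun n => cInt (P.ν x x)
      (fun l => Complex.exp (-Complex.I * ((t - u n : ℝ) : ℂ) * l))) atTop (𝓝 (inner ℂ x x : ℂ)) := by
    have hone : cInt (P.ν x x) (fun _ : ℝ => (1:ℂ)) = (inner ℂ x x : ℂ) := by
      have := calc_one P x x
      rw [ContinuousLinearMap.one_apply] at this
      exact this.symm
    rw [← hone]
    refine cInt_tendsto (P.ν x x) (C := 1) (fun n => expf_meas _) (fun n l => expf_bound _ _)
      (fun l => ?_)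
    have hc : Continuous fun r : ℝ => Complex.exp (-Complex.I * r * l) :=
      Complex.continuous_exp.comp ((continuous_const.mul Complex.continuous_ofReal).mul
        continuous_const)
    have h12 := (hc.tendsto 0).comp h0
    simp only [Function.comp_apply, Function.comp, Complex.ofReal_zero, mul_zero, zero_mul, Complex.exp_zero] at h12
    refine h12.congr fun n => ?_
    simp only [Function.comp_apply]
    try push_cast
    try ring_nf
  have hsq2 : Tendsto (fun n => dist (U (u n) x) (U t x) ^ 2) atTop (𝓝 0) := by
    simp only [hsq]
    have h7 := (Complex.continuous_re.tendsto _).comp hlim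
    have h8 := ((h7.const_mul (2:ℝ)).const_sub (2 * ‖x‖ ^ 2))
    have h9 : 2 * ‖x‖ ^ 2 - 2 * (inner ℂ x x : ℂ).re = 0 := by
      rw [hipnorm x]; ring
    rw [h9] at h8
    exact h8
  have h10 := (Real.continuous_sqrt.tendsto 0).comp hsq2
  rw [Real.sqrt_zero] at h10
  refine h10.congr fun n => ?_
  simp [Function.comp_apply, Function.comp, Real.sqrt_sq dist_nonneg]

end Ugroup

end Stmt6Aux
namespace Stmt6Aux

lemma G_cont (z : ℂ) : Continuous fun p : ℝ × ℝ =>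
    Complex.exp (Complex.I * z * p.1) * Complex.exp (-Complex.I * p.1 * p.2) := by
  refine Continuous.mul ?_ ?_
  · exact Complex.continuous_exp.comp (continuous_const.mul (Complex.continuous_ofReal.comp continuous_fst))
  · exact Complex.continuous_exp.comp
      ((continuous_const.mul (Complex.continuous_ofReal.comp continuous_fst)).mul
        (Complex.continuous_ofReal.comp continuous_snd))

lemma G_norm (z : ℂ) (t l : ℝ) :
    ‖Complex.exp (Complex.I * z * t) * Complex.exp (-Complex.I * t * l)‖
      = Real.exp (-z.im * t) := by
  rw [norm_mul, Complex.norm_exp, Complex.norm_exp]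
  have h1 : (Complex.I * z * t).re = -z.im * t := by
    rw [cexp_re_eq]; simp
  have h2 : (-Complex.I * t * l).re = 0 := by simp
  rw [h1, h2, Real.exp_zero, mul_one]

lemma G_integrable (z : ℂ) (hz : 0 < z.im) (μ : Measure ℝ) [IsFiniteMeasure μ] :
    Integrable (fun p : ℝ × ℝ =>
      Complex.exp (Complex.I * z * p.1) * Complex.exp (-Complex.I * p.1 * p.2))
      ((volume.restrict (Set.Ioi (0:ℝ))).prod μ) := by
  have hdom : Integrable (fun p : ℝ × ℝ => Real.exp (-z.im * p.1) * 1)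
      ((volume.restrict (Set.Ioi (0:ℝ))).prod μ) :=
    Integrable.mul_prod (exp_neg_integrableOn_Ioi 0 hz) (integrable_const 1)
  refine Integrable.mono' hdom (G_cont z).aestronglyMeasurable
    (Filter.Eventually.of_forall fun p => ?_)
  rw [G_norm z p.1 p.2, mul_one]

lemma term_integrable (z : ℂ) (hz : 0 < z.im) (μ : Measure ℝ) [IsFiniteMeasure μ] :
    Integrable (fun t : ℝ => Complex.exp (Complex.I * z * t)
      * ∫ l, Complex.exp (-Complex.I * t * l) ∂μ) (volume.restrict (Set.Ioi (0:ℝ))) := by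
  have h := (G_integrable z hz μ).integral_prod_left
  refine h.congr (Filter.Eventually.of_forall fun t => ?_)
  show (∫ l, Complex.exp (Complex.I * z * t) * Complex.exp (-Complex.I * t * l) ∂μ) = _
  rw [integral_const_mul]

lemma swap_term (z : ℂ) (hz : 0 < z.im) (μ : Measure ℝ) [IsFiniteMeasure μ] :
    (∫ t in Set.Ioi (0:ℝ), Complex.exp (Complex.I * z * t)
        * ∫ l, Complex.exp (-Complex.I * t * l) ∂μ)
      = ∫ l, -(Complex.I * (z - l))⁻¹ ∂μ := by
  have h1 : (∫ t in Set.Ioi (0:ℝ), Complex.exp (Complex.I * z * t)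
        * ∫ l, Complex.exp (-Complex.I * t * l) ∂μ)
      = ∫ t in Set.Ioi (0:ℝ), ∫ l,
          Complex.exp (Complex.I * z * t) * Complex.exp (-Complex.I * t * l) ∂μ := by
    refine integral_congr_ae (Filter.Eventually.of_forall fun t => ?_)
    show Complex.exp (Complex.I * z * t) * (∫ l, Complex.exp (-Complex.I * t * l) ∂μ)
      = (∫ l, Complex.exp (Complex.I * z * t) * Complex.exp (-Complex.I * t * l) ∂μ)
    rw [integral_const_mul]
  rw [h1]
  rw [MeasureTheory.integral_integral_swap (G_integrable z hz μ)]
  refine integral_congr_ae (Filter.Eventually.of_forall fun l => ?_)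
  have h2 : ∀ t : ℝ, Complex.exp (Complex.I * z * t) * Complex.exp (-Complex.I * t * l)
      = Complex.exp ((Complex.I * (z - l)) * t) := by
    intro t
    rw [← Complex.exp_add]
    congr 1
    ring
  simp only [h2]
  have h3 : (Complex.I * (z - l)).re < 0 := by
    simp only [Complex.mul_re, Complex.I_re, Complex.I_im, Complex.sub_re, Complex.sub_im,
      Complex.ofReal_re, Complex.ofReal_im]
    simpa using hz
  exact integral_cexp_Ioi h3

end Stmt6Aux
/-- If `Im z > 0` then the resolvent `(zI - T)⁻¹` of the self-adjoint operator `T` satisfies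
`(zI - T)⁻¹ x = -i ∫₀^∞ e^{izt} e^{-itT} x dt` (Bochner integral) for every `x ∈ H`. -/
theorem stmt6 {H : Type} [NormedAddCommGroup H] [InnerProductSpace ℂ H] [CompleteSpace H]
    (P : SpectralLike H) (U : ℝ → H →L[ℂ] H)
    (hU : ∀ t : ℝ, IsCalc P (fun l => Complex.exp (-Complex.I * t * l)) (U t))
    (z : ℂ) (hz : 0 < z.im) (R : H →L[ℂ] H)
    (hR : IsCalc P (fun l => (z - l)⁻¹) R) :
    ∀ x : H, R x = (-Complex.I) • ∫ t in Set.Ioi (0 : ℝ), Complex.exp (Complex.I * z * t) • U t x := by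
  intro x
  have hnormU := Stmt6Aux.hU_norm P U hU
  have hcont : Continuous fun t : ℝ => U t x := Stmt6Aux.hU_cont P U hU x
  have hphi_cont : Continuous fun t : ℝ => Complex.exp (Complex.I * z * t) • U t x :=
    (Complex.continuous_exp.comp (continuous_const.mul Complex.continuous_ofReal)).smul hcont
  have hint : Integrable (fun t : ℝ => Complex.exp (Complex.I * z * t) • U t x)
      (volume.restrict (Set.Ioi (0:ℝ))) := by
    have hdom : Integrable (fun t : ℝ => Real.exp (-z.im * t) * ‖x‖)
        (volume.restrict (Set.Ioi (0:ℝ))) := (exp_neg_integrableOn_Ioi 0 hz).mul_const _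
    refine hdom.mono' hphi_cont.aestronglyMeasurable (Filter.Eventually.of_forall fun t => ?_)
    have h1 : (Complex.I * z * (t:ℂ)).re = -z.im * t := by
      rw [Stmt6Aux.cexp_re_eq]; simp
    have h2 : ‖Complex.exp (Complex.I * z * t) • U t x‖ = Real.exp (-z.im * t) * ‖x‖ := by
      rw [norm_smul, hnormU t x, Complex.norm_exp, h1]
    exact le_of_eq h2
  refine ext_inner_left ℂ fun y => ?_
  rw [hR x y, inner_smul_right, ← innerSL_apply_apply (𝕜 := ℂ)]
  rw [← ContinuousLinearMap.integral_comp_comm (innerSL ℂ y) hint]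
  have hpt : ∀ t : ℝ, (innerSL ℂ y) (Complex.exp (Complex.I * z * t) • U t x)
      = Complex.exp (Complex.I * z * t)
        * cInt (P.ν y x) (fun l => Complex.exp (-Complex.I * t * l)) := by
    intro t
    rw [innerSL_apply_apply, inner_smul_right, hU t x y]
  rw [integral_congr_ae (Filter.Eventually.of_forall hpt)]
  have hexp : (∫ t in Set.Ioi (0:ℝ), Complex.exp (Complex.I * z * t)
      * cInt (P.ν y x) (fun l => Complex.exp (-Complex.I * t * l)))
      = cInt (P.ν y x) (fun l => -(Complex.I * (z - l))⁻¹) := by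
    set s1 := MeasureTheory.ComplexMeasure.re (P.ν y x) with hs1
    set s2 := MeasureTheory.ComplexMeasure.im (P.ν y x) with hs2
    have h1 := Stmt6Aux.term_integrable z hz s1.toJordanDecomposition.posPart
    have h2 := Stmt6Aux.term_integrable z hz s1.toJordanDecomposition.negPart
    have h3 := Stmt6Aux.term_integrable z hz s2.toJordanDecomposition.posPart
    have h4 := Stmt6Aux.term_integrable z hz s2.toJordanDecomposition.negPart
    have hfun : (fun t : ℝ => Complex.exp (Complex.I * z * t)
        * cInt (P.ν y x) (fun l => Complex.exp (-Complex.I * t * l)))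
        = fun t : ℝ =>
          ((Complex.exp (Complex.I * z * t)
              * ∫ l, Complex.exp (-Complex.I * t * l) ∂s1.toJordanDecomposition.posPart)
            - (Complex.exp (Complex.I * z * t)
              * ∫ l, Complex.exp (-Complex.I * t * l) ∂s1.toJordanDecomposition.negPart))
          + Complex.I * ((Complex.exp (Complex.I * z * t)
              * ∫ l, Complex.exp (-Complex.I * t * l) ∂s2.toJordanDecomposition.posPart)
            - (Complex.exp (Complex.I * z * t)
              * ∫ l, Complex.exp (-Complex.I * t * l) ∂s2.toJordanDecomposition.negPart)) := by
      funext t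
      simp only [cInt, sInt, ← hs1, ← hs2]
      ring
    have hsub12 : Integrable (fun t : ℝ => cexp (Complex.I * z * t) * ∫ l, cexp (-Complex.I * t * l) ∂s1.toJordanDecomposition.posPart - cexp (Complex.I * z * t) * ∫ l, cexp (-Complex.I * t * l) ∂s1.toJordanDecomposition.negPart)
        (volume.restrict (Set.Ioi (0:ℝ))) := h1.sub h2
    have hmul34 : Integrable (fun t : ℝ => Complex.I * (cexp (Complex.I * z * t) * ∫ l, cexp (-Complex.I * t * l) ∂s2.toJordanDecomposition.posPart - cexp (Complex.I * z * t) * ∫ l, cexp (-Complex.I * t * l) ∂s2.toJordanDecomposition.negPart))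
        (volume.restrict (Set.Ioi (0:ℝ))) := (h3.sub h4).const_mul Complex.I
    rw [hfun, integral_add hsub12 hmul34]
    rw [integral_sub h1 h2, integral_const_mul, integral_sub h3 h4,
        Stmt6Aux.swap_term z hz _, Stmt6Aux.swap_term z hz _, Stmt6Aux.swap_term z hz _,
        Stmt6Aux.swap_term z hz _]
    simp only [cInt, sInt]
    rfl
  rw [hexp, ← Stmt6Aux.cInt_smul (P.ν y x) (-Complex.I) (fun l => -(Complex.I * (z - l))⁻¹)]
  congr 1
  funext l
  have hzl : z - (l:ℂ) ≠ 0 := by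
    intro h
    have h5 := congrArg Complex.im h
    simp at h5
    linarith
  rw [mul_inv, Complex.inv_I]
  ring_nf
  simp [Complex.I_sq]
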